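/- arXiv:1102.1872 — 4 statements merged into one kernel-verified Lean document; each statement's English description precedes it below -/
import Mathlib

section
/- For a weakly increasing vector x ∈ ℤ_{≥0}^k whose nonzero values form a set {1,...,r} (i.e. a canonical vector attached to an ordered partition of k), define A(x) := {(i,j,+) : 1 ≤ i < j ≤ k, x_i + x_j > 0} ∪ {(i,j,−) : 1 ≤ i < j ≤ k, x_j − x_i > 0}. Then for two such canonical vectors x and y, one has A(x) = A(y) if and only if either x = y, or {x, y} = {x', y'} where x' is the canonical vector of a partition [0, 1, k_2, ..., k_r] and y' is the canonical vector of the partition [1, k_2, ..., k_r]. -/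
/-- An ordered partition `[k₀, k₁, ..., k_r]` of `k`. -/
def IsOrderedPartition (k : ℕ) (p : List ℕ) : Prop :=
  p ≠ [] ∧ (∀ a ∈ p.tail, 0 < a) ∧ p.sum = k

/-- The canonical weakly increasing vector of an ordered partition. -/
def canonVec (p : List ℕ) (j : ℕ) : ℕ :=
  ((Finset.range p.length).filter fun i => (p.take (i + 1)).sum ≤ j).card

/-- `A(x)`: the noncompact roots `±e_i ± e_j` of `gl_k(ℍ)` positive on `x`;
`(i,j,+)` records `x_i + x_j > 0` and `(i,j,−)` records `x_j − x_i > 0` (for `i < j`). -/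
def Aset (k : ℕ) (x : Fin k → ℕ) : Set (Fin k × Fin k × Bool) :=
  {t | t.1 < t.2.1 ∧ (if t.2.2 then 0 < x t.1 + x t.2.1 else x t.1 < x t.2.1)}

lemma canonVec_cons (a : ℕ) (p : List ℕ) (j : ℕ) :
    canonVec (a :: p) j = if a ≤ j then canonVec p (j - a) + 1 else 0 := by
  unfold canonVec
  rw [Finset.card_filter, Finset.card_filter, List.length_cons, Finset.sum_range_succ']
  by_cases h : a ≤ j
  · rw [if_pos h]
    have e1 : ∀ i ∈ Finset.range p.length,
        ((if ((a :: p).take (i + 1 + 1)).sum ≤ j then 1 else 0) : ℕ)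
          = if (p.take (i + 1)).sum ≤ j - a then 1 else 0 := by
      intro i _
      have e : ((a :: p).take (i + 1 + 1)).sum = a + (p.take (i + 1)).sum := by
        simp [List.take_succ_cons]
      rw [e]
      exact if_congr (by omega) rfl rfl
    rw [Finset.sum_congr rfl e1]
    have e0 : (((a :: p).take (0 + 1)).sum ≤ j) := by simpa using h
    rw [if_pos e0]
  · rw [if_neg h]
    have e1 : ∀ i ∈ Finset.range p.length,
        ((if ((a :: p).take (i + 1 + 1)).sum ≤ j then 1 else 0) : ℕ) = 0 := by
      intro i _
      have e : ((a :: p).take (i + 1 + 1)).sum = a + (p.take (i + 1)).sum := by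
        simp [List.take_succ_cons]
      rw [e, if_neg (by omega)]
    rw [Finset.sum_congr rfl e1]
    have e0 : ¬(((a :: p).take (0 + 1)).sum ≤ j) := by simpa using h
    rw [if_neg e0]
    simp

lemma canonVec_zero_cons (p : List ℕ) (j : ℕ) :
    canonVec (0 :: p) j = canonVec p j + 1 := by
  rw [canonVec_cons, if_pos (Nat.zero_le j), Nat.sub_zero]

lemma canonVec_pos_zero {q : List ℕ} (hq : ∀ b ∈ q, 0 < b) : canonVec q 0 = 0 := by
  cases q with
  | nil => simp [canonVec]
  | cons b q =>
    rw [canonVec_cons, if_neg]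
    have := hq b (by simp)
    omega

lemma canonVec_mono (p : List ℕ) : ∀ {m n : ℕ}, m ≤ n → canonVec p m ≤ canonVec p n := by
  induction p with
  | nil => intro m n _; simp [canonVec]
  | cons a p ih =>
    intro m n h
    rw [canonVec_cons, canonVec_cons]
    by_cases ha : a ≤ m
    · rw [if_pos ha, if_pos (ha.trans h)]
      exact Nat.succ_le_succ (ih (by omega))
    · rw [if_neg ha]
      exact Nat.zero_le _

lemma canonVec_step : ∀ (q : List ℕ), (∀ b ∈ q, 0 < b) → ∀ t : ℕ,
    canonVec q (t + 1) ≤ canonVec q t + 1 := by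
  intro q
  induction q with
  | nil => intro _ t; simp [canonVec]
  | cons b q ih =>
    intro hq t
    have hb : 0 < b := hq b (by simp)
    have hq' : ∀ c ∈ q, 0 < c := fun c hc => hq c (by simp [hc])
    rw [canonVec_cons, canonVec_cons]
    by_cases h1 : b ≤ t
    · rw [if_pos h1, if_pos (by omega)]
      have e : t + 1 - b = (t - b) + 1 := by omega
      rw [e]
      have := ih hq' (t - b)
      omega
    · by_cases h2 : b ≤ t + 1
      · rw [if_pos h2, if_neg h1]
        have e : t + 1 - b = 0 := by omega
        rw [e, canonVec_pos_zero hq']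
      · rw [if_neg h2]
        exact Nat.zero_le _

lemma canonVec_step' (a : ℕ) {q : List ℕ} (hq : ∀ b ∈ q, 0 < b) (j : ℕ) :
    canonVec (a :: q) (j + 1) ≤ canonVec (a :: q) j + 1 := by
  rw [canonVec_cons, canonVec_cons]
  by_cases h1 : a ≤ j
  · rw [if_pos h1, if_pos (by omega)]
    have e : j + 1 - a = (j - a) + 1 := by omega
    rw [e]
    have := canonVec_step q hq (j - a)
    omega
  · by_cases h2 : a ≤ j + 1
    · rw [if_pos h2, if_neg h1]
      have e : j + 1 - a = 0 := by omega
      rw [e, canonVec_pos_zero hq]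
    · rw [if_neg h2]
      exact Nat.zero_le _

lemma canonVec_zero_le (a : ℕ) {q : List ℕ} (hq : ∀ c ∈ q, 0 < c) :
    canonVec (a :: q) 0 ≤ 1 := by
  rw [canonVec_cons]
  split
  · rw [Nat.zero_sub, canonVec_pos_zero hq]
  · omega

lemma aset_shift {k : ℕ} {q : List ℕ} (_hq : ∀ c ∈ q, 0 < c) (_hsum : (1 :: q).sum = k) :
    Aset k (fun j : Fin k => canonVec (0 :: 1 :: q) ↑j)
      = Aset k (fun j : Fin k => canonVec (1 :: q) ↑j) := by
  ext t
  obtain ⟨i, j, bb⟩ := t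
  simp only [Aset, Set.mem_setOf_eq]
  rw [canonVec_zero_cons, canonVec_zero_cons]
  cases bb
  · simp only [Bool.false_eq_true, if_false]
    constructor <;> rintro ⟨h, h'⟩ <;> exact ⟨h, by omega⟩
  · simp only [if_true]
    have hpos : i < j → 0 < canonVec (1 :: q) ↑j := by
      intro hij
      have hj : 1 ≤ (j : ℕ) := by
        have : (i : ℕ) < (j : ℕ) := hij
        omega
      rw [canonVec_cons, if_pos hj]
      omega
    constructor <;> rintro ⟨h, h'⟩ <;> refine ⟨h, ?_⟩
    · have := hpos h; omega
    · omega

lemma forward_case {k a b : ℕ} {q qq : List ℕ} (hk : 0 < k)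
    (hqq : ∀ c ∈ qq, 0 < c)
    (hppsum : (b :: qq).sum = k)
    (hmain : ∀ n, n < k →
      canonVec (a :: q) n + canonVec (b :: qq) 0 = canonVec (b :: qq) n + canonVec (a :: q) 0)
    (h2 : ∀ j, 0 < j → j < k → (0 < canonVec (a :: q) j ↔ 0 < canonVec (b :: qq) j))
    (hX0 : canonVec (a :: q) 0 = 1) (hY0 : canonVec (b :: qq) 0 = 0) :
    ∃ q' : List ℕ, (∀ c ∈ q', 0 < c) ∧ (1 :: q').sum = k ∧
      ((fun j : Fin k => canonVec (a :: q) ↑j) = fun j : Fin k => canonVec (0 :: 1 :: q') ↑j) ∧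
      ((fun j : Fin k => canonVec (b :: qq) ↑j) = fun j : Fin k => canonVec (1 :: q') ↑j) := by
  have hb1 : 1 ≤ b := by
    by_contra h
    have hb0 : b = 0 := by omega
    subst hb0
    rw [canonVec_zero_cons] at hY0
    omega
  have hb2 : b ≤ 1 := by
    rcases Nat.lt_or_ge 1 k with h2k | h1k
    · have hX1 : 0 < canonVec (a :: q) 1 := by
        have := hmain 1 h2k
        omega
      have hY1 : 0 < canonVec (b :: qq) 1 := (h2 1 one_pos h2k).mp hX1
      rw [canonVec_cons] at hY1
      by_contra hb
      rw [if_neg (by omega)] at hY1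
      omega
    · have : b + qq.sum = k := by simpa using hppsum
      omega
  have hb : b = 1 := le_antisymm hb2 hb1
  subst hb
  refine ⟨qq, hqq, hppsum, ?_, rfl⟩
  funext j
  rw [canonVec_zero_cons]
  have := hmain j.val j.isLt
  omega

/-- For canonical vectors `x`, `y` of ordered partitions of `k`, one has `A(x) = A(y)` iff
`x = y` or `{x, y}` consists of the canonical vectors of `[0, 1, k₂, ..., k_r]` and
`[1, k₂, ..., k_r]`. -/
theorem stmt_2 (k : ℕ) (x y : Fin k → ℕ)
    (hx : ∃ p, IsOrderedPartition k p ∧ x = fun j : Fin k => canonVec p j)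
    (hy : ∃ p, IsOrderedPartition k p ∧ y = fun j : Fin k => canonVec p j) :
    Aset k x = Aset k y ↔
      (x = y ∨ ∃ q : List ℕ, (∀ a ∈ q, 0 < a) ∧ (1 :: q).sum = k ∧
        (((x = fun j : Fin k => canonVec (0 :: 1 :: q) j) ∧
            (y = fun j : Fin k => canonVec (1 :: q) j)) ∨
         ((y = fun j : Fin k => canonVec (0 :: 1 :: q) j) ∧
            (x = fun j : Fin k => canonVec (1 :: q) j)))) := by
  obtain ⟨p, ⟨hpne, hptl, hpsum⟩, rfl⟩ := hx
  obtain ⟨pp, ⟨hppne, hpptl, hppsum⟩, rfl⟩ := hy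
  rcases Nat.eq_zero_or_pos k with hk0 | hk
  · subst hk0
    have hxy : (fun j : Fin 0 => canonVec p ↑j) = fun j : Fin 0 => canonVec pp ↑j :=
      funext fun j => j.elim0
    constructor
    · intro _; exact Or.inl hxy
    · intro _; rw [hxy]
  obtain ⟨a, q, rfl⟩ : ∃ a q, p = a :: q := by
    cases p with
    | nil => exact absurd rfl hpne
    | cons a q => exact ⟨a, q, rfl⟩
  obtain ⟨b, qq, rfl⟩ : ∃ b qq, pp = b :: qq := by
    cases pp with
    | nil => exact absurd rfl hppne
    | cons b qq => exact ⟨b, qq, rfl⟩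
  have hq : ∀ c ∈ q, 0 < c := by simpa using hptl
  have hqq : ∀ c ∈ qq, 0 < c := by simpa using hpptl
  constructor
  · intro hA
    have hmem : ∀ t, t ∈ Aset k (fun j : Fin k => canonVec (a :: q) ↑j)
        ↔ t ∈ Aset k (fun j : Fin k => canonVec (b :: qq) ↑j) := fun t => by rw [hA]
    have h1 : ∀ i j : ℕ, i < j → j < k →
        (canonVec (a :: q) i < canonVec (a :: q) j
          ↔ canonVec (b :: qq) i < canonVec (b :: qq) j) := by
      intro i j hij hj
      have h := hmem (⟨i, by omega⟩, ⟨j, hj⟩, false)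
      simp only [Aset, Set.mem_setOf_eq, Fin.mk_lt_mk, Bool.false_eq_true, if_false] at h
      constructor
      · intro hh; exact (h.mp ⟨hij, hh⟩).2
      · intro hh; exact (h.mpr ⟨hij, hh⟩).2
    have h2 : ∀ j : ℕ, 0 < j → j < k →
        (0 < canonVec (a :: q) j ↔ 0 < canonVec (b :: qq) j) := by
      intro j hj0 hj
      have h := hmem (⟨0, hk⟩, ⟨j, hj⟩, true)
      simp only [Aset, Set.mem_setOf_eq, Fin.mk_lt_mk, if_true] at h
      have mX := canonVec_mono (a :: q) (Nat.zero_le j)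
      have mY := canonVec_mono (b :: qq) (Nat.zero_le j)
      constructor
      · intro hh
        have := (h.mp ⟨hj0, by omega⟩).2
        omega
      · intro hh
        have := (h.mpr ⟨hj0, by omega⟩).2
        omega
    have hmain : ∀ n, n < k →
        canonVec (a :: q) n + canonVec (b :: qq) 0
          = canonVec (b :: qq) n + canonVec (a :: q) 0 := by
      intro n
      induction n with
      | zero => intro _; omega
      | succ n ih =>
        intro h
        have h0 := ih (by omega)
        have s1 : canonVec (a :: q) n ≤ canonVec (a :: q) (n + 1) := canonVec_mono _ (Nat.le_succ n)
        have s2 := canonVec_step' a hq n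
        have s3 : canonVec (b :: qq) n ≤ canonVec (b :: qq) (n + 1) := canonVec_mono _ (Nat.le_succ n)
        have s4 := canonVec_step' b hqq n
        have h5 := h1 n (n + 1) (by omega) h
        omega
    have hX0 := canonVec_zero_le a hq
    have hY0 := canonVec_zero_le b hqq
    by_cases hc : canonVec (a :: q) 0 = canonVec (b :: qq) 0
    · left
      funext j
      have := hmain j.val j.isLt
      omega
    · right
      rcases Nat.lt_or_ge (canonVec (b :: qq) 0) (canonVec (a :: q) 0) with hlt | hge
      · obtain ⟨q', ha1, ha2, ha3, ha4⟩ :=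
          forward_case hk hqq hppsum hmain h2 (by omega) (by omega)
        exact ⟨q', ha1, ha2, Or.inl ⟨ha3, ha4⟩⟩
      · have hmain' : ∀ n, n < k →
            canonVec (b :: qq) n + canonVec (a :: q) 0
              = canonVec (a :: q) n + canonVec (b :: qq) 0 := by
          intro n hn
          have := hmain n hn
          omega
        have h2' : ∀ j, 0 < j → j < k →
            (0 < canonVec (b :: qq) j ↔ 0 < canonVec (a :: q) j) :=
          fun j hh hh' => (h2 j hh hh').symm
        obtain ⟨q', ha1, ha2, ha3, ha4⟩ :=
          forward_case hk hq hpsum hmain' h2' (by omega) (by omega)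
        exact ⟨q', ha1, ha2, Or.inr ⟨ha3, ha4⟩⟩
  · rintro (heq | ⟨q', hq', hsum', ⟨hx', hy'⟩ | ⟨hy', hx'⟩⟩)
    · rw [heq]
    · rw [hx', hy']
      exact aset_shift hq' hsum'
    · rw [hx', hy']
      exact (aset_shift hq' hsum').symm
end

section
/- For a weakly increasing vector x ∈ ℤ_{≥0}^k whose nonzero values form a set {1,...,r}, define B(x) := A(x) ∪ {i : 1 ≤ i ≤ k, x_i > 0}, where A(x) = {(i,j,+) : i < j, x_i + x_j > 0} ∪ {(i,j,−) : i < j, x_j − x_i > 0}. Then the map x ↦ B(x) is injective on the set of such canonical vectors: B(x) = B(y) implies x = y. -/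
/-- `B(x) = A(x) ∪ {i : x_i > 0}`, encoding the noncompact roots `±e_i ± e_j` and
`±2e_i` of `gl_{2k}(ℝ)` positive on `x`. -/
def Bset (k : ℕ) (x : Fin k → ℕ) : Set ((Fin k × Fin k × Bool) ⊕ Fin k) :=
  Sum.inl '' Aset k x ∪ Sum.inr '' {i | 0 < x i}

/-! The prefix sums of an ordered partition increase strictly, so its canonical vector starts at
`0` or `1` and rises by steps of `0` or `1`. Such a vector is determined by the sign of its first
entry and by which of the comparisons `x m < x (m + 1)` hold, and `B(x)` records both, through
the index `0` and the roots `(m, m + 1, −)`. -/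

theorem List.strictMonoOn_sum_take_succ {M : Type*} [AddMonoid M] [Preorder M]
    [AddLeftStrictMono M] {l : List M} (hl : ∀ a ∈ l.tail, 0 < a) :
    StrictMonoOn (fun i => (l.take (i + 1)).sum) (Set.Iio l.length) := by
  refine strictMonoOn_of_lt_succ Set.ordConnected_Iio fun i _ _ hi => ?_
  have hi : i + 1 < l.length := hi
  have hi' : i < l.tail.length := by rw [List.length_tail]; omega
  have hpos : 0 < l[i + 1] := hl _ (List.getElem_tail hi' ▸ List.getElem_mem hi')
  simpa only [Order.succ_eq_add_one, l.sum_take_succ (i + 1) hi] using lt_add_of_pos_right _ hpos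

namespace Finset

variable {ι : Type*} {s : Finset ι} {S : ι → ℕ}

theorem card_filter_eq_le_one_of_injOn (hS : Set.InjOn S s) (c : ℕ) :
    #(s.filter (S · = c)) ≤ 1 :=
  card_le_one.2 fun _ ha _ hb =>
    hS (mem_filter.1 ha).1 (mem_filter.1 hb).1 ((mem_filter.1 ha).2.trans (mem_filter.1 hb).2.symm)

theorem card_filter_le_zero_le_one_of_injOn (hS : Set.InjOn S s) :
    #(s.filter (S · ≤ 0)) ≤ 1 := by
  simpa only [Nat.le_zero] using card_filter_eq_le_one_of_injOn hS 0

theorem card_filter_le_succ_le_of_injOn [DecidableEq ι] (hS : Set.InjOn S s) (m : ℕ) :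
    #(s.filter (S · ≤ m + 1)) ≤ #(s.filter (S · ≤ m)) + 1 := calc
  #(s.filter (S · ≤ m + 1)) = #(s.filter (S · ≤ m) ∪ s.filter (S · = m + 1)) := by
    rw [← filter_or]
    congr 2 with i
    omega
  _ ≤ #(s.filter (S · ≤ m)) + #(s.filter (S · = m + 1)) := card_union_le _ _
  _ ≤ #(s.filter (S · ≤ m)) + 1 := Nat.add_le_add_left (card_filter_eq_le_one_of_injOn hS _) _

end Finset

/-- The shape of the canonical vectors `canonVec p`. -/
structure IsUnitStep (f : ℕ → ℕ) : Prop where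
  zero_le_one : f 0 ≤ 1
  le_succ (m : ℕ) : f m ≤ f (m + 1)
  succ_le (m : ℕ) : f (m + 1) ≤ f m + 1

theorem IsUnitStep.eq_of_lt_succ_iff {f g : ℕ → ℕ} (hf : IsUnitStep f) (hg : IsUnitStep g)
    {n : ℕ} (h₀ : 0 < n → (0 < f 0 ↔ 0 < g 0))
    (hsucc : ∀ m, m + 1 < n → (f m < f (m + 1) ↔ g m < g (m + 1))) :
    ∀ m < n, f m = g m := by
  intro m hm
  induction m with
  | zero =>
    have := h₀ hm
    have := hf.zero_le_one
    have := hg.zero_le_one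
    omega
  | succ m ih =>
    have := ih (by omega)
    have := hsucc m hm
    have := hf.le_succ m
    have := hf.succ_le m
    have := hg.le_succ m
    have := hg.succ_le m
    omega

theorem isUnitStep_canonVec {p : List ℕ} (hp : ∀ a ∈ p.tail, 0 < a) :
    IsUnitStep (canonVec p) := by
  have hinj : Set.InjOn (fun i => (p.take (i + 1)).sum) ↑(Finset.range p.length) := by
    simpa only [Finset.coe_range] using (List.strictMonoOn_sum_take_succ hp).injOn
  exact
    { zero_le_one := Finset.card_filter_le_zero_le_one_of_injOn hinj
      le_succ := fun m => Finset.card_le_card <|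
        Finset.monotone_filter_right _ fun _ _ h => Nat.le_succ_of_le h
      succ_le := Finset.card_filter_le_succ_le_of_injOn hinj }

section Bset

variable {k : ℕ} {x y : Fin k → ℕ}

theorem pos_iff_of_Bset_eq (h : Bset k x = Bset k y) (i : Fin k) : 0 < x i ↔ 0 < y i := by
  simpa [Bset] using Set.ext_iff.1 h (Sum.inr i)

theorem lt_iff_of_Bset_eq (h : Bset k x = Bset k y) {i j : Fin k} (hij : i < j) :
    x i < x j ↔ y i < y j := by
  simpa [Bset, Aset, hij] using Set.ext_iff.1 h (Sum.inl (i, j, false))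

end Bset

/-- The map `x ↦ B(x)` is injective on canonical vectors of ordered partitions of `k`. -/
theorem stmt_3 (k : ℕ) (x y : Fin k → ℕ)
    (hx : ∃ p, IsOrderedPartition k p ∧ x = fun j : Fin k => canonVec p j)
    (hy : ∃ p, IsOrderedPartition k p ∧ y = fun j : Fin k => canonVec p j)
    (h : Bset k x = Bset k y) : x = y := by
  obtain ⟨p, ⟨-, hp, -⟩, rfl⟩ := hx
  obtain ⟨q, ⟨-, hq, -⟩, rfl⟩ := hy
  funext j
  refine (isUnitStep_canonVec hp).eq_of_lt_succ_iff (isUnitStep_canonVec hq) (n := k)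
    (fun hk => pos_iff_of_Bset_eq h ⟨0, hk⟩) (fun m hm => ?_) j j.isLt
  exact lt_iff_of_Bset_eq h (i := ⟨m, by omega⟩) (j := ⟨m + 1, hm⟩) (Fin.mk_lt_mk.2 m.lt_succ_self)
end

section
/- Let x ∈ ℤ_{≥0}^k be the canonical vector of an ordered partition [k_0, k_1, ..., k_r] of k (value i occurring exactly k_i times, weakly increasing). Then the cardinality of A(x) = {(i,j,+) : i < j, x_i + x_j > 0} ∪ {(i,j,−) : i < j, x_j − x_i > 0} equals 2·C(k,2) − C(k_0,2) − Σ_{i=0}^{r} C(k_i,2), where C(a,2) = a(a−1)/2. -/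
/-!
Write `S_m` for the sum of the first `m` parts, so that `m ≤ x_j ↔ S_m ≤ j`: the blocks of the
weakly increasing vector `x` are the intervals `[S_N, S_N + k_N)`. Count `A(x)` column by column.
For fixed `j`, every `(i, j, +)` with `i < j` lies in `A(x)` once `x_j > 0`, i.e. once `j ≥ k₀`, and
none otherwise; this gives `C(k,2) - C(k₀,2)`. The `(i, j, −)` are exactly the `i < S_{x_j}`, and
the remaining `j - S_{x_j}` indices below `j` lie in the block of `j`; summed over a block of size
`k_N` they give `C(k_N, 2)`, so this part contributes `C(k,2) - Σ C(k_N, 2)`.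
-/

open Finset

lemma Nat.sum_range_id_eq_choose_two (n : ℕ) : ∑ i ∈ range n, i = n.choose 2 := by
  rw [sum_range_id, Nat.choose_two_right]

lemma sum_range_ite_le_add_choose_two {a k : ℕ} (h : a ≤ k) :
    ∑ j ∈ range k, (if a ≤ j then j else 0) + a.choose 2 = k.choose 2 := by
  have hIco : {j ∈ range k | a ≤ j} = Ico a k := by
    ext j
    simp only [mem_filter, mem_range, mem_Ico]
    omega
  rw [← sum_filter, hIco, add_comm, ← Nat.sum_range_id_eq_choose_two,
    ← Nat.sum_range_id_eq_choose_two, sum_range_add_sum_Ico _ h]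

lemma ncard_Aset (k : ℕ) (x : ℕ → ℕ) :
    (Aset k fun j : Fin k => x j).ncard =
      ∑ j ∈ range k, (#{i ∈ range j | 0 < x i + x j} + #{i ∈ range j | x i < x j}) := by
  rw [Aset, Set.ncard_eq_toFinset_card', Set.toFinset_ofPred, card_filter, Fintype.sum_prod_type,
    sum_comm]
  simp only [Fintype.sum_prod_type, Fintype.sum_bool, if_true, Bool.false_eq_true, if_false]
  rw [← Fin.sum_univ_eq_sum_range]
  refine Fintype.sum_congr _ _ fun j => ?_
  have hrange : {i ∈ range k | i < (j : ℕ)} = range j := by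
    ext i
    simp only [mem_filter, mem_range]
    omega
  simp only [Fin.lt_def]
  rw [Fin.sum_univ_eq_sum_range (fun i => if i < (j : ℕ) ∧ 0 < x i + x j then 1 else 0),
    Fin.sum_univ_eq_sum_range (fun i => if i < (j : ℕ) ∧ x i < x j then 1 else 0),
    ← card_filter, ← card_filter, ← filter_filter, ← filter_filter, hrange]

lemma card_filter_pos_add_of_monotone {x : ℕ → ℕ} (hx : Monotone x) (j : ℕ) :
    #{i ∈ range j | 0 < x i + x j} = if 0 < x j then j else 0 := by
  split_ifs with hj
  · rw [filter_true_of_mem fun i _ => by omega, card_range]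
  · rw [card_eq_zero, filter_eq_empty_iff]
    intro i hi
    have := hx (mem_range.1 hi).le
    omega

namespace canonVec

variable (p : List ℕ)

theorem le_iff {m j : ℕ} : m ≤ canonVec p j ↔ m ≤ p.length ∧ (p.take m).sum ≤ j := by
  have hS := List.monotone_sum_take p
  constructor
  · intro hm
    refine ⟨hm.trans ((card_filter_le _ _).trans_eq (card_range _)), ?_⟩
    by_contra! hj
    obtain rfl | hm0 := m.eq_zero_or_pos
    · simp at hj
    have : canonVec p j ≤ m - 1 := by
      refine (card_le_card fun i hi => ?_).trans_eq (card_range _)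
      rw [mem_filter, mem_range] at hi
      rw [mem_range]
      by_contra! h
      have : (p.take m).sum ≤ (p.take (i + 1)).sum := hS (by omega)
      omega
    omega
  · rintro ⟨hm, hj⟩
    refine (card_range m).symm.le.trans (card_le_card fun i hi => ?_)
    rw [mem_range] at hi
    exact mem_filter.2 ⟨mem_range.2 (by omega), (hS (show i + 1 ≤ m by omega)).trans hj⟩

theorem le_length (j : ℕ) : canonVec p j ≤ p.length :=
  ((le_iff p (j := j)).1 le_rfl).1

theorem sum_take_le (j : ℕ) : (p.take (canonVec p j)).sum ≤ j :=
  ((le_iff p (j := j)).1 le_rfl).2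

theorem monotone : Monotone (canonVec p) := fun i _ hij =>
  (le_iff p).2 ⟨le_length p i, (sum_take_le p i).trans hij⟩

theorem lt_iff (i j : ℕ) : canonVec p i < canonVec p j ↔ i < (p.take (canonVec p j)).sum := by
  rw [← not_le, ← not_le, le_iff]
  simp [le_length]

theorem pos_iff (hp : p ≠ []) (j : ℕ) : 0 < canonVec p j ↔ p.headI ≤ j := by
  obtain ⟨a, q, rfl⟩ := List.exists_cons_of_ne_nil hp
  rw [Nat.lt_iff_add_one_le]
  simpa using le_iff (a :: q) (m := 1) (j := j)

theorem eq_of_mem_Ico {N j : ℕ} (hN : N < p.length)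
    (hj : j ∈ Ico (p.take N).sum ((p.take N).sum + p[N])) : canonVec p j = N := by
  rw [mem_Ico, ← List.sum_take_succ _ _ hN] at hj
  have hge : N ≤ canonVec p j := (le_iff p).2 ⟨hN.le, hj.1⟩
  have hlt : ¬ N + 1 ≤ canonVec p j := fun h => by
    have := ((le_iff p).1 h).2
    omega
  omega

theorem card_filter_lt (j : ℕ) :
    #{i ∈ range j | canonVec p i < canonVec p j} = (p.take (canonVec p j)).sum := by
  have := sum_take_le p j
  have hfilter : {i ∈ range j | canonVec p i < canonVec p j} =
      range (p.take (canonVec p j)).sum := by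
    ext i
    rw [mem_filter, mem_range, mem_range, lt_iff]
    omega
  rw [hfilter, card_range]

theorem sum_sub_sum_take_eq (N : ℕ) (hN : N ≤ p.length) :
    ∑ j ∈ range (p.take N).sum, (j - (p.take (canonVec p j)).sum) =
      ((p.take N).map (·.choose 2)).sum := by
  induction N with
  | zero => simp
  | succ N ih =>
    have hNlen : N < p.length := hN
    have hfiber : ∑ j ∈ Ico (p.take N).sum ((p.take N).sum + p[N]),
        (j - (p.take (canonVec p j)).sum) = p[N].choose 2 := by
      rw [sum_congr rfl fun j hj => by rw [eq_of_mem_Ico p hNlen hj], sum_Ico_eq_sum_range]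
      simp only [Nat.add_sub_cancel_left, Nat.sum_range_id_eq_choose_two]
    rw [List.sum_take_succ _ _ hNlen, ← sum_range_add_sum_Ico _ (Nat.le_add_right _ _),
      ih hNlen.le, hfiber, List.map_take, List.map_take,
      List.sum_take_succ _ _ (by simpa using hNlen), List.getElem_map]

theorem sum_sum_take_add_sum_choose_two :
    ∑ j ∈ range p.sum, (p.take (canonVec p j)).sum + (p.map (·.choose 2)).sum =
      p.sum.choose 2 := by
  have h := sum_sub_sum_take_eq p p.length le_rfl
  rw [List.take_length] at h
  rw [← h, ← sum_add_distrib, ← Nat.sum_range_id_eq_choose_two]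
  exact sum_congr rfl fun j _ => Nat.add_sub_of_le (sum_take_le p j)

end canonVec

/-- For the canonical vector `x` of an ordered partition `[k₀, ..., k_r]` of `k`,
`|A(x)| = 2·C(k,2) − C(k₀,2) − Σ_{i=0}^r C(k_i,2)`. -/
theorem stmt_4 (k : ℕ) (p : List ℕ) (hp : IsOrderedPartition k p) :
    (Aset k (fun j : Fin k => canonVec p j)).ncard =
      2 * Nat.choose k 2 - Nat.choose p.headI 2 - (p.map fun a => Nat.choose a 2).sum := by
  obtain ⟨hne, -, rfl⟩ := hp
  have hhead : p.headI ≤ p.sum := by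
    obtain ⟨a, q, rfl⟩ := List.exists_cons_of_ne_nil hne
    simp
  have hplus := sum_range_ite_le_add_choose_two hhead
  have hminus := canonVec.sum_sum_take_add_sum_choose_two p
  have hchoose := Nat.choose_le_choose 2 hhead
  rw [ncard_Aset, sum_add_distrib]
  simp only [card_filter_pos_add_of_monotone (canonVec.monotone p), canonVec.pos_iff p hne,
    canonVec.card_filter_lt]
  omega
end

section
/- Let α_1, ..., α_n ∈ ℂ and let H := {σ ∈ Aut(ℂ) : σ maps the multiset {α_1,...,α_n} to itself}. Then the fixed field {z ∈ ℂ : σ(z) = z for all σ ∈ H} equals ℚ(e_1(α), ..., e_n(α)), the subfield of ℂ generated by the values of the elementary symmetric polynomials at (α_1,...,α_n). -/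
/-! An automorphism `σ` of `ℂ` maps the multiset `α` to itself iff it fixes every `e_j(α)`:
`σ (e_j(α)) = e_j(σ α)`, and conversely a multiset in a domain is determined by its cardinality
and its elementary symmetric functions, being the roots of `∏ (X - αᵢ)`. So the fixed field of `H`
is the fixed field of `Aut(ℂ/K)` for `K = ℚ(e_1(α), …, e_n(α))`, which is `K`.

For the last point, every automorphism of a subring `R ⊆ ℂ` extends to `ℂ`: `ℂ` is an algebraic
closure of `R[T] ≅ R[X_t]_{t ∈ T}` for a transcendence basis `T`, and the automorphism acts on
coefficients. If `z ∉ K` is transcendental over `K`, extend `z ↦ z + 1` from `K[z] ≅ K[X]`; if it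
is algebraic, its minimal polynomial is separable of degree `≥ 2`, so some automorphism of its
splitting field over `K` moves `z` to another root. -/

open Polynomial

/-- The `j`-th elementary symmetric polynomial evaluated at `α₁, ..., α_n`. -/
noncomputable def esymm (n j : ℕ) (α : Fin n → ℂ) : ℂ :=
  ∑ s ∈ Finset.powersetCard j (Finset.univ : Finset (Fin n)), ∏ i ∈ s, α i

namespace IsAlgClosed

variable {Ω : Type*} [Field Ω] [IsAlgClosed Ω]

theorem exists_ringEquiv_extend {R : Type*} [CommRing R] [Algebra R Ω] [FaithfulSMul R Ω]
    (τ : R ≃+* R) : ∃ σ : Ω ≃+* Ω, ∀ x, σ (algebraMap R Ω x) = algebraMap R Ω (τ x) := by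
  obtain ⟨s, hs⟩ := exists_isTranscendenceBasis R Ω
  have := isAlgClosure_of_transcendence_basis _ hs
  let e := hs.1.aevalEquiv.symm.toRingEquiv.trans <|
    (MvPolynomial.mapEquiv s τ).trans hs.1.aevalEquiv.toRingEquiv
  refine ⟨IsAlgClosure.equivOfEquiv Ω Ω e, fun x => ?_⟩
  have he : e (algebraMap R _ x) = algebraMap R _ (τ x) := by
    simp only [e, RingEquiv.trans_apply, AlgEquiv.coe_ringEquiv, AlgEquiv.commutes,
      MvPolynomial.mapEquiv_apply, MvPolynomial.algebraMap_eq, MvPolynomial.map_C]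
    rw [← MvPolynomial.algebraMap_eq, AlgEquiv.commutes, RingEquiv.coe_toRingHom]
  rw [IsScalarTower.algebraMap_apply R (Algebra.adjoin R (Set.range ((↑) : s → Ω))) Ω,
    IsScalarTower.algebraMap_apply R (Algebra.adjoin R (Set.range ((↑) : s → Ω))) Ω (τ x),
    IsAlgClosure.equivOfEquiv_algebraMap, he]

theorem exists_ringEquiv_fixing_of_transcendental {F : Type*} [CommRing F] [Algebra F Ω]
    {z : Ω} (hz : Transcendental F z) :
    ∃ σ : Ω ≃+* Ω, (∀ x, σ (algebraMap F Ω x) = algebraMap F Ω x) ∧ σ z = z + 1 := by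
  let e := algEquivOfTranscendental F z hz
  obtain ⟨σ, hσ⟩ :=
    exists_ringEquiv_extend (Ω := Ω) (e.symm.trans ((taylorEquiv 1).trans e)).toRingEquiv
  refine ⟨σ, fun x => ?_, ?_⟩
  · rw [IsScalarTower.algebraMap_apply F (Algebra.adjoin F {z}) Ω, hσ, AlgEquiv.coe_ringEquiv,
      AlgEquiv.commutes]
  · have hX : taylorEquiv (1 : F) X = X + C 1 := taylor_X 1
    simpa [e, hX] using hσ (e X)

theorem exists_ringEquiv_fixing_of_isSeparable {F : Type*} [Field F] [Algebra F Ω]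
    {z : Ω} (hz : IsSeparable F z) (hzF : z ∉ (algebraMap F Ω).range) :
    ∃ σ : Ω ≃+* Ω, (∀ x, σ (algebraMap F Ω x) = algebraMap F Ω x) ∧ σ z ≠ z := by
  classical
  have hint : IsIntegral F z := hz.isIntegral
  set p := minpoly F z
  have hp : p ≠ 0 := minpoly.ne_zero hint
  let L := IntermediateField.adjoin F (p.rootSet Ω)
  have : IsSplittingField F L p :=
    IntermediateField.adjoin_rootSet_isSplittingField (IsAlgClosed.splits _)
  have : Normal F L := Normal.of_isSplittingField p
  have hroot {y : Ω} (hy : aeval y p = 0) : y ∈ L :=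
    IntermediateField.subset_adjoin _ _ (mem_rootSet.2 ⟨hp, hy⟩)
  obtain ⟨z', hz'z⟩ : ∃ z' : p.rootSet Ω, z' ≠ ⟨z, mem_rootSet.2 ⟨hp, minpoly.aeval F z⟩⟩ := by
    refine Fintype.exists_ne_of_one_lt_card ?_ _
    rw [card_rootSet_eq_natDegree hz (IsAlgClosed.splits _)]
    exact (minpoly.two_le_natDegree_iff hint).2 fun ⟨y, hy⟩ => hzF ⟨y, hy⟩
  let zL : L := ⟨z, hroot (minpoly.aeval F z)⟩
  let z'L : L := ⟨z', hroot (mem_rootSet.1 z'.2).2⟩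
  have hminpoly : minpoly F zL = p := (minpoly.algebraMap_eq (algebraMap L Ω).injective zL).symm
  obtain ⟨τ, hτ⟩ := minpoly.exists_algEquiv_of_root' (x := z'L)
    (isIntegral_algebraMap_iff (algebraMap L Ω).injective |>.1 hint).isAlgebraic
    (by
      rw [hminpoly]
      apply (algebraMap L Ω).injective
      rw [← aeval_algebraMap_apply, map_zero]
      exact (mem_rootSet.1 z'.2).2)
  obtain ⟨σ, hσ⟩ := exists_ringEquiv_extend (Ω := Ω) τ.toRingEquiv
  refine ⟨σ, fun x => ?_, ?_⟩
  · rw [IsScalarTower.algebraMap_apply F L Ω, hσ, AlgEquiv.coe_ringEquiv, AlgEquiv.commutes]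
  · rw [show z = algebraMap L Ω zL from rfl, hσ, AlgEquiv.coe_ringEquiv, hτ]
    exact fun h => hz'z (Subtype.ext h)

theorem mem_range_algebraMap_of_forall_ringEquiv_apply_eq {F : Type*} [Field F] [PerfectField F]
    [Algebra F Ω] {z : Ω}
    (h : ∀ σ : Ω ≃+* Ω, (∀ x, σ (algebraMap F Ω x) = algebraMap F Ω x) → σ z = z) :
    z ∈ (algebraMap F Ω).range := by
  by_contra hzF
  by_cases hz : IsAlgebraic F z
  · obtain ⟨σ, hσF, hσz⟩ := exists_ringEquiv_fixing_of_isSeparable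
      (PerfectField.separable_of_irreducible (minpoly.irreducible hz.isIntegral)) hzF
    exact hσz (h σ hσF)
  · obtain ⟨σ, hσF, hσz⟩ := exists_ringEquiv_fixing_of_transcendental hz
    simpa [hσz] using h σ hσF

end IsAlgClosed

theorem map_multiset_esymm {R S : Type*} [CommSemiring R] [CommSemiring S] (f : R →+* S)
    (s : Multiset R) (j : ℕ) : f (s.esymm j) = (s.map f).esymm j := by
  simp [Multiset.esymm, Multiset.powersetCard_map, map_multiset_sum, Multiset.map_map,
    map_multiset_prod]

theorem Multiset.eq_of_card_eq_of_esymm_eq {R : Type*} [CommRing R] [IsDomain R]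
    {s t : Multiset R} (hcard : card s = card t) (h : ∀ j, s.esymm j = t.esymm j) : s = t := by
  rw [← roots_multiset_prod_X_sub_C s, ← roots_multiset_prod_X_sub_C t,
    prod_X_sub_X_eq_sum_esymm, prod_X_sub_X_eq_sum_esymm, hcard]
  simp only [h]

theorem Multiset.map_eq_self_iff_forall_esymm {R : Type*} [CommRing R] [IsDomain R]
    (f : R →+* R) (s : Multiset R) : s.map f = s ↔ ∀ j, f (s.esymm j) = s.esymm j := by
  simp only [map_multiset_esymm]
  exact ⟨fun h j => by rw [h], eq_of_card_eq_of_esymm_eq (card_map _ _)⟩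

theorem esymm_eq_multiset_esymm (n j : ℕ) (α : Fin n → ℂ) :
    esymm n j α = (Multiset.map α Finset.univ.val).esymm j :=
  (Finset.esymm_map_val α _ j).symm

theorem esymm_mem_closure (n j : ℕ) (α : Fin n → ℂ) :
    esymm n j α ∈ Subfield.closure {x : ℂ | ∃ j, 1 ≤ j ∧ j ≤ n ∧ x = esymm n j α} := by
  rcases Nat.eq_zero_or_pos j with rfl | hj
  · simp [esymm]
  by_cases hjn : j ≤ n
  · exact Subfield.subset_closure ⟨j, hj, hjn, rfl⟩
  · have hempty : Finset.powersetCard j (Finset.univ : Finset (Fin n)) = ∅ :=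
      Finset.powersetCard_eq_empty.2 (by rw [Finset.card_fin]; omega)
    rw [esymm, hempty, Finset.sum_empty]
    exact zero_mem _

/-- Let `H` be the set of field automorphisms of `ℂ` mapping the multiset
`{α₁, ..., α_n}` to itself.  Then the fixed field of `H` is the subfield of `ℂ`
generated by the elementary symmetric functions `e₁(α), ..., e_n(α)`. -/
theorem stmt_8 (n : ℕ) (α : Fin n → ℂ) :
    {z : ℂ | ∀ σ : ℂ ≃+* ℂ,
        Multiset.map (⇑σ) (Multiset.map α Finset.univ.val) = Multiset.map α Finset.univ.val →
        σ z = z} =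
      (Subfield.closure {x : ℂ | ∃ j, 1 ≤ j ∧ j ≤ n ∧ x = esymm n j α} : Set ℂ) := by
  have hfix (σ : ℂ ≃+* ℂ) :
      Multiset.map σ (Multiset.map α Finset.univ.val) = Multiset.map α Finset.univ.val ↔
        ∀ j, σ (esymm n j α) = esymm n j α := by
    simp only [esymm_eq_multiset_esymm]
    exact Multiset.map_eq_self_iff_forall_esymm (σ : ℂ →+* ℂ) _
  ext z
  constructor
  · intro hz
    obtain ⟨⟨z, hzK⟩, rfl⟩ := IsAlgClosed.mem_range_algebraMap_of_forall_ringEquiv_apply_eq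
      (F := Subfield.closure _) fun σ hσ =>
        hz σ <| (hfix σ).2 fun j => hσ ⟨_, esymm_mem_closure n j α⟩
    exact hzK
  · intro hz σ hσ
    refine (Subfield.closure_le (t := RingHom.eqLocusField (σ : ℂ →+* ℂ) (RingHom.id ℂ))).2
      ?_ hz
    rintro _ ⟨j, -, -, rfl⟩
    exact (hfix σ).1 hσ j
end
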